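/- Fix an integer n ≥ 2 and real constants k1, k2. Let m, b_1, …, b_n, P_1, …, P_n : ℝ³ → ℝ be smooth functions of (x, y, t) with P_{j,x} = m b_{j,x} for every 1 ≤ j ≤ n, satisfying: m_y = k1 (m P_1)_x + (1/2) k2 (2 m b_{1,x} + m_x b_1); b_{1,x} − b_{1,xxx} = m_x; b_{j,x} − b_{j,xxx} = k1 (m P_{j−1})_x + (1/2) k2 (2 m b_{j−1,x} + m_x b_{j−1}) for every 2 ≤ j ≤ n; and m_t = k1 (m P_n)_x + (1/2) k2 (2 m b_{n,x} + m_x b_n) (so that m solves the (2+1)-dimensional gCH hierarchy). Then for every real λ ≠ 0 the Lax triad compatibility conditions hold pointwise on ℝ³: U_y − (V¹)_x + U V¹ − V¹ U = 0 and U_t − (Vⁿ)_x + U Vⁿ − Vⁿ U = 0, where V¹ = U + W[b_1, P_1] and Vⁿ = U + Σ_{j=1}^{n} λ^{−2(n−j)} W[b_j, P_j]. -/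

import Mathlib

open Matrix Finset

/-- Partial derivative in the first (x) variable. -/
noncomputable def dX3 (f : ℝ → ℝ → ℝ → ℝ) : ℝ → ℝ → ℝ → ℝ :=
  fun x y t => deriv (fun x' => f x' y t) x

/-- Partial derivative in the second (y) variable. -/
noncomputable def dY3 (f : ℝ → ℝ → ℝ → ℝ) : ℝ → ℝ → ℝ → ℝ :=
  fun x y t => deriv (fun y' => f x y' t) y

/-- Partial derivative in the third (t) variable. -/
noncomputable def dT3 (f : ℝ → ℝ → ℝ → ℝ) : ℝ → ℝ → ℝ → ℝ :=
  fun x y t => deriv (fun t' => f x y t') t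

/-- Smoothness of a function of three real variables. -/
def Smooth3 (f : ℝ → ℝ → ℝ → ℝ) : Prop :=
  ContDiff ℝ (⊤ : ℕ∞) (fun p : ℝ × ℝ × ℝ => f p.1 p.2.1 p.2.2)

/-- Entrywise partial derivative in x of a matrix-valued function on ℝ³. -/
noncomputable def mdX3 (M : ℝ → ℝ → ℝ → Matrix (Fin 2) (Fin 2) ℝ) :
    ℝ → ℝ → ℝ → Matrix (Fin 2) (Fin 2) ℝ :=
  fun x y t => Matrix.of fun i j => deriv (fun x' => M x' y t i j) x

/-- Entrywise partial derivative in y of a matrix-valued function on ℝ³. -/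
noncomputable def mdY3 (M : ℝ → ℝ → ℝ → Matrix (Fin 2) (Fin 2) ℝ) :
    ℝ → ℝ → ℝ → Matrix (Fin 2) (Fin 2) ℝ :=
  fun x y t => Matrix.of fun i j => deriv (fun y' => M x y' t i j) y

/-- Entrywise partial derivative in t of a matrix-valued function on ℝ³. -/
noncomputable def mdT3 (M : ℝ → ℝ → ℝ → Matrix (Fin 2) (Fin 2) ℝ) :
    ℝ → ℝ → ℝ → Matrix (Fin 2) (Fin 2) ℝ :=
  fun x y t => Matrix.of fun i j => deriv (fun t' => M x y t' i j) t

/-- The gCH spatial Lax matrix U(λ) = (1/2)[[−1, λm],[−k1λm−k2λ, 1]] (on ℝ³). -/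
noncomputable def GU3 (lam k1 k2 : ℝ) (m : ℝ → ℝ → ℝ → ℝ) :
    ℝ → ℝ → ℝ → Matrix (Fin 2) (Fin 2) ℝ :=
  fun x y t => (1/2 : ℝ) • !![-1, lam * m x y t; -(k1 * lam * m x y t) - k2 * lam, 1]

/-- The matrix W[b,P](λ) = −(1/2)[[A,B],[C,−A]] of the gCH hierarchy (on ℝ³). -/
noncomputable def GW3 (lam k1 k2 : ℝ) (m b P : ℝ → ℝ → ℝ → ℝ) :
    ℝ → ℝ → ℝ → Matrix (Fin 2) (Fin 2) ℝ :=
  fun x y t =>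
    (-(1/2) : ℝ) •
      !![lam ^ (-2 : ℤ) + k1 * P x y t + (1/2) * k2 * (b x y t - dX3 b x y t) - 1,
         -(lam⁻¹) * (m x y t - dX3 b x y t + dX3 (dX3 b) x y t)
           + lam * m x y t * (-(k1 * P x y t) - (1/2) * k2 * b x y t + 1);
         lam⁻¹ * (k1 * (m x y t + dX3 (dX3 b) x y t + dX3 b x y t) + k2)
           - lam * (k1 * m x y t + k2) * (-(k1 * P x y t) - (1/2) * k2 * b x y t + 1),
         -(lam ^ (-2 : ℤ) + k1 * P x y t + (1/2) * k2 * (b x y t - dX3 b x y t) - 1)]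

/-! ### Auxiliary material for the proof -/

section Aux

lemma Smooth3.sliceX' {f} (hf : Smooth3 f) (y t : ℝ) :
    ContDiff ℝ (⊤ : ℕ∞) (fun s => f s y t) :=
  (hf.of_le (by simp)).comp (contDiff_id.prodMk (contDiff_const.prodMk contDiff_const))

lemma Smooth3.sliceY' {f} (hf : Smooth3 f) (x t : ℝ) :
    ContDiff ℝ (⊤ : ℕ∞) (fun s => f x s t) :=
  (hf.of_le (by simp)).comp (contDiff_const.prodMk (contDiff_id.prodMk contDiff_const))

lemma Smooth3.sliceT' {f} (hf : Smooth3 f) (x y : ℝ) :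
    ContDiff ℝ (⊤ : ℕ∞) (fun s => f x y s) :=
  (hf.of_le (by simp)).comp (contDiff_const.prodMk (contDiff_const.prodMk contDiff_id))

lemma sliceX_dX3 {f} (hf : Smooth3 f) (y t : ℝ) :
    ContDiff ℝ (⊤ : ℕ∞) (fun s => dX3 f s y t) :=
  (contDiff_infty_iff_deriv.mp (hf.sliceX' y t)).2

lemma sliceX_dX3_dX3 {f} (hf : Smooth3 f) (y t : ℝ) :
    ContDiff ℝ (⊤ : ℕ∞) (fun s => dX3 (dX3 f) s y t) :=
  (contDiff_infty_iff_deriv.mp (sliceX_dX3 hf y t)).2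

lemma hasDerivAt_X {f : ℝ → ℝ → ℝ → ℝ} {y t : ℝ} (hf : ContDiff ℝ (⊤ : ℕ∞) (fun s => f s y t))
    (x : ℝ) : HasDerivAt (fun s => f s y t) (dX3 f x y t) x :=
  ((hf.differentiable (by simp)).differentiableAt).hasDerivAt

lemma hasDerivAt_Y {f : ℝ → ℝ → ℝ → ℝ} {x t : ℝ} (hf : ContDiff ℝ (⊤ : ℕ∞) (fun s => f x s t))
    (y : ℝ) : HasDerivAt (fun s => f x s t) (dY3 f x y t) y :=
  ((hf.differentiable (by simp)).differentiableAt).hasDerivAt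

lemma hasDerivAt_T {f : ℝ → ℝ → ℝ → ℝ} {x y : ℝ} (hf : ContDiff ℝ (⊤ : ℕ∞) (fun s => f x y s))
    (t : ℝ) : HasDerivAt (fun s => f x y s) (dT3 f x y t) t :=
  ((hf.differentiable (by simp)).differentiableAt).hasDerivAt

lemma HasDerivAt.congr_d {f : ℝ → ℝ} {d d' x : ℝ} (h : HasDerivAt f d x) (e : d' = d) :
    HasDerivAt f d' x := e ▸ h

/-- The "direction" matrix: `Dmat3 lam k1 v = v • (1/2)·[[0, λ],[−k1 λ, 0]]`. -/
noncomputable def Kmat3 (lam k1 : ℝ) : Matrix (Fin 2) (Fin 2) ℝ :=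
  (1/2 : ℝ) • !![0, lam; -(k1 * lam), 0]

noncomputable def Dmat3 (lam k1 v : ℝ) : Matrix (Fin 2) (Fin 2) ℝ := v • Kmat3 lam k1

/-- Pointwise value matrix for U. -/
noncomputable def Umat3 (lam k1 k2 mv : ℝ) : Matrix (Fin 2) (Fin 2) ℝ :=
  (1/2 : ℝ) • !![-1, lam * mv; -(k1 * lam * mv) - k2 * lam, 1]

/-- Pointwise value matrix for W. -/
noncomputable def Wmat3 (lam k1 k2 mv bv bxv bxxv pv : ℝ) : Matrix (Fin 2) (Fin 2) ℝ :=
  (-(1/2) : ℝ) •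
    !![lam ^ (-2 : ℤ) + k1 * pv + (1/2) * k2 * (bv - bxv) - 1,
       -(lam⁻¹) * (mv - bxv + bxxv) + lam * mv * (-(k1 * pv) - (1/2) * k2 * bv + 1);
       lam⁻¹ * (k1 * (mv + bxxv + bxv) + k2)
         - lam * (k1 * mv + k2) * (-(k1 * pv) - (1/2) * k2 * bv + 1),
       -(lam ^ (-2 : ℤ) + k1 * pv + (1/2) * k2 * (bv - bxv) - 1)]

/-- Pointwise value matrix for the x-derivative of W. -/
noncomputable def WXmat3 (lam k1 k2 mv mxv bv bxv bxxv bxxxv pv pxv : ℝ) :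
    Matrix (Fin 2) (Fin 2) ℝ :=
  (-(1/2) : ℝ) •
    !![k1 * pxv + (1/2) * k2 * (bxv - bxxv),
       -(lam⁻¹) * (mxv - bxxv + bxxxv)
         + (lam * mxv * (-(k1 * pv) - (1/2) * k2 * bv + 1)
            + lam * mv * (-(k1 * pxv) - (1/2) * k2 * bxv));
       lam⁻¹ * (k1 * (mxv + bxxxv + bxxv))
         - (lam * (k1 * mxv) * (-(k1 * pv) - (1/2) * k2 * bv + 1)
            + lam * (k1 * mv + k2) * (-(k1 * pxv) - (1/2) * k2 * bxv)),
       -(k1 * pxv + (1/2) * k2 * (bxv - bxxv))]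

lemma GU3_eq (lam k1 k2 : ℝ) (m : ℝ → ℝ → ℝ → ℝ) (x y t : ℝ) :
    GU3 lam k1 k2 m x y t = Umat3 lam k1 k2 (m x y t) := rfl

lemma GW3_eq (lam k1 k2 : ℝ) (m b P : ℝ → ℝ → ℝ → ℝ) (x y t : ℝ) :
    GW3 lam k1 k2 m b P x y t
      = Wmat3 lam k1 k2 (m x y t) (b x y t) (dX3 b x y t) (dX3 (dX3 b) x y t) (P x y t) := rfl


lemma GW3_entry_hasDerivAt (lam k1 k2 : ℝ) {m b P : ℝ → ℝ → ℝ → ℝ}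
    (hm : Smooth3 m) (hb : Smooth3 b) (hP : Smooth3 P) (x y t : ℝ) (i j : Fin 2) :
    HasDerivAt (fun x' => GW3 lam k1 k2 m b P x' y t i j)
      (WXmat3 lam k1 k2 (m x y t) (dX3 m x y t) (b x y t) (dX3 b x y t)
        (dX3 (dX3 b) x y t) (dX3 (dX3 (dX3 b)) x y t) (P x y t) (dX3 P x y t) i j) x := by
  have hm' := hasDerivAt_X (hm.sliceX' y t) x
  have hb0 := hasDerivAt_X (hb.sliceX' y t) x
  have hb1 := hasDerivAt_X (f := dX3 b) (sliceX_dX3 hb y t) x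
  have hb2 := hasDerivAt_X (f := dX3 (dX3 b)) (sliceX_dX3_dX3 hb y t) x
  have hP' := hasDerivAt_X (hP.sliceX' y t) x
  fin_cases i <;> fin_cases j <;>
    simp only [GW3, WXmat3, Matrix.smul_apply, Matrix.cons_val', Matrix.cons_val_zero,
      Matrix.cons_val_one, Matrix.head_cons, Matrix.head_fin_const, Matrix.empty_val',
      Matrix.cons_val_fin_one, Matrix.of_apply, smul_eq_mul, Fin.isValue, Fin.mk_one,
      Fin.zero_eta]
  · exact HasDerivAt.const_mul _
      ((((hasDerivAt_const x (lam ^ (-2:ℤ))).add (hP'.const_mul k1)).add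
        ((hb0.sub hb1).const_mul ((1/2) * k2))).sub (hasDerivAt_const x 1)) |>.congr_d (by ring)
  · exact HasDerivAt.const_mul _
      ((((hm'.sub hb1).add hb2).const_mul (-(lam⁻¹))).add
        ((hm'.const_mul lam).mul
          ((((hP'.const_mul k1).neg.sub (hb0.const_mul ((1/2) * k2))).add_const 1))))
      |>.congr_d (by simp only [Pi.neg_apply, Pi.sub_apply])
  · exact HasDerivAt.const_mul _
      ((((((hm'.add hb2).add hb1).const_mul k1).add_const k2).const_mul (lam⁻¹)).sub
        ((((hm'.const_mul k1).add_const k2).const_mul lam).mul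
          ((((hP'.const_mul k1).neg.sub (hb0.const_mul ((1/2) * k2))).add_const 1))))
      |>.congr_d (by simp only [Pi.neg_apply, Pi.sub_apply])
  · exact HasDerivAt.const_mul _
      (((((hasDerivAt_const x (lam ^ (-2:ℤ))).add (hP'.const_mul k1)).add
        ((hb0.sub hb1).const_mul ((1/2) * k2))).sub (hasDerivAt_const x 1)).neg)
      |>.congr_d (by ring)
lemma GU3_entry_hasDerivAt_X (lam k1 k2 : ℝ) {m : ℝ → ℝ → ℝ → ℝ}
    (hm : Smooth3 m) (x y t : ℝ) (i j : Fin 2) :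
    HasDerivAt (fun x' => GU3 lam k1 k2 m x' y t i j)
      (Dmat3 lam k1 (dX3 m x y t) i j) x := by
  have hm' := hasDerivAt_X (hm.sliceX' y t) x
  fin_cases i <;> fin_cases j <;>
    simp only [GU3, Dmat3, Kmat3, Matrix.smul_apply, Matrix.cons_val', Matrix.cons_val_zero,
      Matrix.cons_val_one, Matrix.head_cons, Matrix.head_fin_const, Matrix.empty_val',
      Matrix.cons_val_fin_one, Matrix.of_apply, smul_eq_mul, Fin.isValue, Fin.mk_one,
      Fin.zero_eta]
  · exact (hasDerivAt_const x ((1/2 : ℝ) * (-1))).congr_d (by ring)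
  · exact ((hm'.const_mul lam).const_mul (1/2)).congr_d (by ring)
  · exact (((hm'.const_mul (k1 * lam)).neg.sub (hasDerivAt_const x (k2 * lam))).const_mul
      (1/2)).congr_d (by ring)
  · exact (hasDerivAt_const x ((1/2 : ℝ) * 1)).congr_d (by ring)

lemma GU3_entry_hasDerivAt_Y (lam k1 k2 : ℝ) {m : ℝ → ℝ → ℝ → ℝ}
    (hm : Smooth3 m) (x y t : ℝ) (i j : Fin 2) :
    HasDerivAt (fun y' => GU3 lam k1 k2 m x y' t i j)
      (Dmat3 lam k1 (dY3 m x y t) i j) y := by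
  have hm' := hasDerivAt_Y (hm.sliceY' x t) y
  fin_cases i <;> fin_cases j <;>
    simp only [GU3, Dmat3, Kmat3, Matrix.smul_apply, Matrix.cons_val', Matrix.cons_val_zero,
      Matrix.cons_val_one, Matrix.head_cons, Matrix.head_fin_const, Matrix.empty_val',
      Matrix.cons_val_fin_one, Matrix.of_apply, smul_eq_mul, Fin.isValue, Fin.mk_one,
      Fin.zero_eta]
  · exact (hasDerivAt_const y ((1/2 : ℝ) * (-1))).congr_d (by ring)
  · exact ((hm'.const_mul lam).const_mul (1/2)).congr_d (by ring)
  · exact (((hm'.const_mul (k1 * lam)).neg.sub (hasDerivAt_const y (k2 * lam))).const_mul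
      (1/2)).congr_d (by ring)
  · exact (hasDerivAt_const y ((1/2 : ℝ) * 1)).congr_d (by ring)

lemma GU3_entry_hasDerivAt_T (lam k1 k2 : ℝ) {m : ℝ → ℝ → ℝ → ℝ}
    (hm : Smooth3 m) (x y t : ℝ) (i j : Fin 2) :
    HasDerivAt (fun t' => GU3 lam k1 k2 m x y t' i j)
      (Dmat3 lam k1 (dT3 m x y t) i j) t := by
  have hm' := hasDerivAt_T (hm.sliceT' x y) t
  fin_cases i <;> fin_cases j <;>
    simp only [GU3, Dmat3, Kmat3, Matrix.smul_apply, Matrix.cons_val', Matrix.cons_val_zero,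
      Matrix.cons_val_one, Matrix.head_cons, Matrix.head_fin_const, Matrix.empty_val',
      Matrix.cons_val_fin_one, Matrix.of_apply, smul_eq_mul, Fin.isValue, Fin.mk_one,
      Fin.zero_eta]
  · exact (hasDerivAt_const t ((1/2 : ℝ) * (-1))).congr_d (by ring)
  · exact ((hm'.const_mul lam).const_mul (1/2)).congr_d (by ring)
  · exact (((hm'.const_mul (k1 * lam)).neg.sub (hasDerivAt_const t (k2 * lam))).const_mul
      (1/2)).congr_d (by ring)
  · exact (hasDerivAt_const t ((1/2 : ℝ) * 1)).congr_d (by ring)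
lemma mdY3_GU3 (lam k1 k2 : ℝ) {m : ℝ → ℝ → ℝ → ℝ} (hm : Smooth3 m) (x y t : ℝ) :
    mdY3 (GU3 lam k1 k2 m) x y t = Dmat3 lam k1 (dY3 m x y t) := by
  ext i j; exact (GU3_entry_hasDerivAt_Y lam k1 k2 hm x y t i j).deriv

lemma mdT3_GU3 (lam k1 k2 : ℝ) {m : ℝ → ℝ → ℝ → ℝ} (hm : Smooth3 m) (x y t : ℝ) :
    mdT3 (GU3 lam k1 k2 m) x y t = Dmat3 lam k1 (dT3 m x y t) := by
  ext i j; exact (GU3_entry_hasDerivAt_T lam k1 k2 hm x y t i j).deriv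

lemma mdX3_pair (lam k1 k2 : ℝ) {m b P : ℝ → ℝ → ℝ → ℝ}
    (hm : Smooth3 m) (hb : Smooth3 b) (hP : Smooth3 P) (x y t : ℝ) :
    mdX3 (fun x y t => GU3 lam k1 k2 m x y t + GW3 lam k1 k2 m b P x y t) x y t
      = Dmat3 lam k1 (dX3 m x y t)
        + WXmat3 lam k1 k2 (m x y t) (dX3 m x y t) (b x y t) (dX3 b x y t)
            (dX3 (dX3 b) x y t) (dX3 (dX3 (dX3 b)) x y t) (P x y t) (dX3 P x y t) := by
  ext i j
  exact ((GU3_entry_hasDerivAt_X lam k1 k2 hm x y t i j).add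
    (GW3_entry_hasDerivAt lam k1 k2 hm hb hP x y t i j)).deriv

lemma mdX3_sum (lam k1 k2 : ℝ) (n : ℕ) {m : ℝ → ℝ → ℝ → ℝ} {b P : ℕ → ℝ → ℝ → ℝ → ℝ}
    (hm : Smooth3 m) (hb : ∀ j ∈ Finset.Icc 1 n, Smooth3 (b j))
    (hP : ∀ j ∈ Finset.Icc 1 n, Smooth3 (P j)) (x y t : ℝ) :
    mdX3 (fun x y t => GU3 lam k1 k2 m x y t
        + ∑ j ∈ Finset.Icc 1 n,
            lam ^ (-(2 : ℤ) * ((n : ℤ) - (j : ℤ))) • GW3 lam k1 k2 m (b j) (P j) x y t) x y t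
      = Dmat3 lam k1 (dX3 m x y t)
        + ∑ j ∈ Finset.Icc 1 n,
            lam ^ (-(2 : ℤ) * ((n : ℤ) - (j : ℤ))) •
              WXmat3 lam k1 k2 (m x y t) (dX3 m x y t) (b j x y t) (dX3 (b j) x y t)
                (dX3 (dX3 (b j)) x y t) (dX3 (dX3 (dX3 (b j))) x y t)
                (P j x y t) (dX3 (P j) x y t) := by
  ext i j
  have hfun : (fun x' => (GU3 lam k1 k2 m x' y t
        + ∑ j' ∈ Finset.Icc 1 n,
            lam ^ (-(2 : ℤ) * ((n : ℤ) - (j' : ℤ))) • GW3 lam k1 k2 m (b j') (P j') x' y t) i j)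
      = fun x' => GU3 lam k1 k2 m x' y t i j
        + ∑ j' ∈ Finset.Icc 1 n,
            lam ^ (-(2 : ℤ) * ((n : ℤ) - (j' : ℤ))) * GW3 lam k1 k2 m (b j') (P j') x' y t i j := by
    funext x'
    simp [Matrix.sum_apply, Matrix.add_apply, Matrix.smul_apply, smul_eq_mul]
  have hD : HasDerivAt (fun x' => (GU3 lam k1 k2 m x' y t
        + ∑ j' ∈ Finset.Icc 1 n,
            lam ^ (-(2 : ℤ) * ((n : ℤ) - (j' : ℤ))) • GW3 lam k1 k2 m (b j') (P j') x' y t) i j)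
      (Dmat3 lam k1 (dX3 m x y t) i j
        + ∑ j' ∈ Finset.Icc 1 n,
            lam ^ (-(2 : ℤ) * ((n : ℤ) - (j' : ℤ))) *
              WXmat3 lam k1 k2 (m x y t) (dX3 m x y t) (b j' x y t) (dX3 (b j') x y t)
                (dX3 (dX3 (b j')) x y t) (dX3 (dX3 (dX3 (b j'))) x y t)
                (P j' x y t) (dX3 (P j') x y t) i j) x := by
    rw [hfun]
    exact (GU3_entry_hasDerivAt_X lam k1 k2 hm x y t i j).add
      (HasDerivAt.fun_sum fun j' hj' =>
        (GW3_entry_hasDerivAt lam k1 k2 hm (hb j' hj') (hP j' hj') x y t i j).const_mul _)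
  have := hD.deriv
  show deriv _ x = _
  rw [this]
  simp [Matrix.sum_apply, Matrix.add_apply, Matrix.smul_apply, smul_eq_mul]
set_option maxHeartbeats 1000000 in
lemma key_level (lam k1 k2 mv mxv bv bxv bxxv bxxxv pv : ℝ) (hlam : lam ≠ 0) :
    Umat3 lam k1 k2 mv * Wmat3 lam k1 k2 mv bv bxv bxxv pv
      - Wmat3 lam k1 k2 mv bv bxv bxxv pv * Umat3 lam k1 k2 mv
      - WXmat3 lam k1 k2 mv mxv bv bxv bxxv bxxxv pv (mv * bxv)
    = Dmat3 lam k1 (lam ^ (-2 : ℤ) * (bxv - bxxxv) + (1 - lam ^ (-2 : ℤ)) * mxv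
        - (k1 * (mxv * pv + mv * (mv * bxv)) + (1/2) * k2 * (2 * mv * bxv + mxv * bv))) := by
  have h2 : lam ^ (-2 : ℤ) = (lam * lam)⁻¹ := by
    rw [_root_.zpow_neg]; norm_num [zpow_two]; ring
  ext i j
  fin_cases i <;> fin_cases j <;>
    · simp only [Umat3, Wmat3, WXmat3, Dmat3, Kmat3, Matrix.sub_apply, Matrix.smul_apply,
        Matrix.mul_apply, Fin.sum_univ_two, Matrix.cons_val', Matrix.cons_val_zero,
        Matrix.cons_val_one, Matrix.head_cons, Matrix.head_fin_const, Matrix.empty_val',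
        Matrix.cons_val_fin_one, Matrix.of_apply, smul_eq_mul, Fin.isValue, Fin.mk_one,
        Fin.zero_eta, h2]
      field_simp
      ring
lemma tele_sum (q : ℕ → ℝ) (n : ℕ) : ∑ j ∈ Finset.Icc 1 n, (q j - q (j - 1)) = q n - q 0 := by
  induction n with
  | zero => simp
  | succ k ih =>
      rw [Finset.sum_Icc_succ_top (by omega : 1 ≤ k + 1), ih]
      simp only [Nat.add_sub_cancel]
      ring

lemma dX3_mul {f g : ℝ → ℝ → ℝ → ℝ} (hf : Smooth3 f) (hg : Smooth3 g) (x y t : ℝ) :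
    dX3 (fun x y t => f x y t * g x y t) x y t
      = dX3 f x y t * g x y t + f x y t * dX3 g x y t :=
  ((hasDerivAt_X (hf.sliceX' y t) x).mul (hasDerivAt_X (hg.sliceX' y t) x)).deriv

lemma scalar_id (lam : ℝ) (hlam : lam ≠ 0) (n : ℕ) (hn : 1 ≤ n) (mx : ℝ) (Sv R : ℕ → ℝ)
    (hR1 : R 1 = mx) (hRr : ∀ j, 2 ≤ j → j ≤ n → R j = Sv (j - 1)) :
    Sv n - mx + ∑ j ∈ Finset.Icc 1 n, lam ^ (-(2 : ℤ) * ((n : ℤ) - (j : ℤ))) *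
      (lam ^ (-2 : ℤ) * R j + (1 - lam ^ (-2 : ℤ)) * mx - Sv j) = 0 := by
  have hstep : ∀ j : ℕ, 1 ≤ j →
      lam ^ (-(2 : ℤ) * ((n : ℤ) - (j : ℤ))) * lam ^ (-2 : ℤ)
        = lam ^ (-(2 : ℤ) * ((n : ℤ) - ((j - 1 : ℕ) : ℤ))) := by
    intro j hj
    rw [← zpow_add₀ hlam]
    congr 1
    have h : ((j - 1 : ℕ) : ℤ) = (j : ℤ) - 1 := by omega
    rw [h]; ring
  set q : ℕ → ℝ := fun j =>
    if j = 0 then 0 else lam ^ (-(2 : ℤ) * ((n : ℤ) - (j : ℤ))) * (mx - Sv j) with hq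
  have hterm : ∀ j ∈ Finset.Icc 1 n,
      lam ^ (-(2 : ℤ) * ((n : ℤ) - (j : ℤ))) *
        (lam ^ (-2 : ℤ) * R j + (1 - lam ^ (-2 : ℤ)) * mx - Sv j) = q j - q (j - 1) := by
    intro j hj
    rw [Finset.mem_Icc] at hj
    rcases Nat.lt_or_ge j 2 with hj2 | hj2
    · have hj1 : j = 1 := by omega
      subst hj1
      simp only [hq, if_neg (by norm_num : (1 : ℕ) ≠ 0), Nat.sub_self, if_pos rfl, hR1]
      ring
    · have h0 : j ≠ 0 := by omega
      have h1 : j - 1 ≠ 0 := by omega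
      simp only [hq, if_neg h0, if_neg h1]
      rw [hRr j hj2 hj.2]
      linear_combination (Sv (j - 1) - mx) * hstep j (by omega)
  rw [Finset.sum_congr rfl hterm, tele_sum]
  have hcn : lam ^ (-(2 : ℤ) * ((n : ℤ) - (n : ℤ))) = 1 := by
    rw [sub_self, mul_zero, zpow_zero]
  simp only [hq, if_neg (by omega : n ≠ 0), if_pos rfl, hcn]
  ring

end Aux

/-- the (2+1)-dimensional gCH hierarchy possesses the Lax triad
U, V¹ = U + W[b₁, P₁], Vⁿ = U + Σ_{j=1}^n λ^{−2(n−j)} W[b_j, P_j]. -/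
theorem twoDgCH_hierarchy_Lax_triad
    (n : ℕ) (hn : 2 ≤ n) (k1 k2 : ℝ)
    (m : ℝ → ℝ → ℝ → ℝ) (b P : ℕ → ℝ → ℝ → ℝ → ℝ)
    (hm : Smooth3 m) (hb : ∀ j, 1 ≤ j → j ≤ n → Smooth3 (b j))
    (hP : ∀ j, 1 ≤ j → j ≤ n → Smooth3 (P j))
    (hPx : ∀ j, 1 ≤ j → j ≤ n → ∀ x y t, dX3 (P j) x y t = m x y t * dX3 (b j) x y t)
    (hy : ∀ x y t, dY3 m x y t
        = k1 * dX3 (fun x y t => m x y t * P 1 x y t) x y t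
          + (1/2) * k2 * (2 * m x y t * dX3 (b 1) x y t + dX3 m x y t * b 1 x y t))
    (h1 : ∀ x y t, dX3 (b 1) x y t - dX3 (dX3 (dX3 (b 1))) x y t = dX3 m x y t)
    (hrec : ∀ j, 2 ≤ j → j ≤ n → ∀ x y t,
      dX3 (b j) x y t - dX3 (dX3 (dX3 (b j))) x y t
        = k1 * dX3 (fun x y t => m x y t * P (j-1) x y t) x y t
          + (1/2) * k2 * (2 * m x y t * dX3 (b (j-1)) x y t + dX3 m x y t * b (j-1) x y t))
    (ht : ∀ x y t, dT3 m x y t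
        = k1 * dX3 (fun x y t => m x y t * P n x y t) x y t
          + (1/2) * k2 * (2 * m x y t * dX3 (b n) x y t + dX3 m x y t * b n x y t))
    (lam : ℝ) (hlam : lam ≠ 0) :
    (∀ x y t,
      mdY3 (GU3 lam k1 k2 m) x y t
        - mdX3 (fun x y t =>
            GU3 lam k1 k2 m x y t + GW3 lam k1 k2 m (b 1) (P 1) x y t) x y t
        + GU3 lam k1 k2 m x y t *
            (GU3 lam k1 k2 m x y t + GW3 lam k1 k2 m (b 1) (P 1) x y t)
        - (GU3 lam k1 k2 m x y t + GW3 lam k1 k2 m (b 1) (P 1) x y t) *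
            GU3 lam k1 k2 m x y t
      = 0)
    ∧ (∀ x y t,
      mdT3 (GU3 lam k1 k2 m) x y t
        - mdX3 (fun x y t => GU3 lam k1 k2 m x y t
            + ∑ j ∈ Finset.Icc 1 n,
                lam ^ (-(2 : ℤ) * ((n : ℤ) - (j : ℤ))) •
                  GW3 lam k1 k2 m (b j) (P j) x y t) x y t
        + GU3 lam k1 k2 m x y t *
            (GU3 lam k1 k2 m x y t
              + ∑ j ∈ Finset.Icc 1 n,
                  lam ^ (-(2 : ℤ) * ((n : ℤ) - (j : ℤ))) •
                    GW3 lam k1 k2 m (b j) (P j) x y t)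
        - (GU3 lam k1 k2 m x y t
              + ∑ j ∈ Finset.Icc 1 n,
                  lam ^ (-(2 : ℤ) * ((n : ℤ) - (j : ℤ))) •
                    GW3 lam k1 k2 m (b j) (P j) x y t) *
            GU3 lam k1 k2 m x y t
      = 0) := by
  constructor
  ·
      have hb1 := hb 1 le_rfl (by omega)
      have hP1 := hP 1 le_rfl (by omega)
      intro x y t
      rw [mdY3_GU3 lam k1 k2 hm x y t, mdX3_pair lam k1 k2 hm hb1 hP1 x y t,
        GU3_eq, GW3_eq, hPx 1 le_rfl (by omega) x y t]
      set U := Umat3 lam k1 k2 (m x y t) with hU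
      set W := Wmat3 lam k1 k2 (m x y t) (b 1 x y t) (dX3 (b 1) x y t) (dX3 (dX3 (b 1)) x y t)
        (P 1 x y t) with hW
      set WX := WXmat3 lam k1 k2 (m x y t) (dX3 m x y t) (b 1 x y t) (dX3 (b 1) x y t)
        (dX3 (dX3 (b 1)) x y t) (dX3 (dX3 (dX3 (b 1))) x y t) (P 1 x y t)
        (m x y t * dX3 (b 1) x y t) with hWX
      have hk := key_level lam k1 k2 (m x y t) (dX3 m x y t) (b 1 x y t) (dX3 (b 1) x y t)
        (dX3 (dX3 (b 1)) x y t) (dX3 (dX3 (dX3 (b 1))) x y t) (P 1 x y t) hlam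
      rw [← hU, ← hW, ← hWX] at hk
      have hk' : U * W - W * U = Dmat3 lam k1 (lam ^ (-2 : ℤ) *
          (dX3 (b 1) x y t - dX3 (dX3 (dX3 (b 1))) x y t) + (1 - lam ^ (-2 : ℤ)) * dX3 m x y t
          - (k1 * (dX3 m x y t * P 1 x y t + m x y t * (m x y t * dX3 (b 1) x y t))
            + (1/2) * k2 * (2 * m x y t * dX3 (b 1) x y t + dX3 m x y t * b 1 x y t))) + WX :=
        sub_eq_iff_eq_add.mp hk
      have hre : Dmat3 lam k1 (dY3 m x y t) - (Dmat3 lam k1 (dX3 m x y t) + WX)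
          + U * (U + W) - (U + W) * U
          = Dmat3 lam k1 (dY3 m x y t) - Dmat3 lam k1 (dX3 m x y t)
            + ((U * W - W * U) - WX) := by noncomm_ring
      rw [hre, hk']
      have hz : dY3 m x y t - dX3 m x y t + (lam ^ (-2 : ℤ) *
          (dX3 (b 1) x y t - dX3 (dX3 (dX3 (b 1))) x y t) + (1 - lam ^ (-2 : ℤ)) * dX3 m x y t
          - (k1 * (dX3 m x y t * P 1 x y t + m x y t * (m x y t * dX3 (b 1) x y t))
            + (1/2) * k2 * (2 * m x y t * dX3 (b 1) x y t + dX3 m x y t * b 1 x y t))) = 0 := by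
        rw [hy x y t, dX3_mul hm hP1 x y t, hPx 1 le_rfl (by omega) x y t, h1 x y t]
        ring
      show Dmat3 lam k1 (dY3 m x y t) - Dmat3 lam k1 (dX3 m x y t)
          + (Dmat3 lam k1 _ + WX - WX) = 0
      rw [add_sub_cancel_right]
      show (dY3 m x y t) • Kmat3 lam k1 - (dX3 m x y t) • Kmat3 lam k1 + _ • Kmat3 lam k1 = 0
      rw [← sub_smul, ← add_smul, hz, zero_smul]
  ·
      intro x y t
      rw [mdT3_GU3 lam k1 k2 hm x y t,
        mdX3_sum lam k1 k2 n hm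
          (fun j hj => hb j (Finset.mem_Icc.mp hj).1 (Finset.mem_Icc.mp hj).2)
          (fun j hj => hP j (Finset.mem_Icc.mp hj).1 (Finset.mem_Icc.mp hj).2) x y t]
      simp only [GU3_eq, GW3_eq]
      -- abbreviations
      set c : ℕ → ℝ := fun j => lam ^ (-(2 : ℤ) * ((n : ℤ) - (j : ℤ))) with hc
      set U := Umat3 lam k1 k2 (m x y t) with hU
      set W : ℕ → Matrix (Fin 2) (Fin 2) ℝ := fun j =>
        Wmat3 lam k1 k2 (m x y t) (b j x y t) (dX3 (b j) x y t) (dX3 (dX3 (b j)) x y t)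
          (P j x y t) with hWdef
      set Sv : ℕ → ℝ := fun j =>
        k1 * (dX3 m x y t * P j x y t + m x y t * (m x y t * dX3 (b j) x y t))
          + (1/2) * k2 * (2 * m x y t * dX3 (b j) x y t + dX3 m x y t * b j x y t) with hSv
      set R : ℕ → ℝ := fun j => dX3 (b j) x y t - dX3 (dX3 (dX3 (b j))) x y t with hR
      set v : ℕ → ℝ := fun j =>
        lam ^ (-2 : ℤ) * R j + (1 - lam ^ (-2 : ℤ)) * dX3 m x y t - Sv j with hv
      -- rewrite the WX sum: dX3 (P j) = m * dX3 (b j)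
      have hWXsum : ∀ j ∈ Finset.Icc 1 n,
          c j • WXmat3 lam k1 k2 (m x y t) (dX3 m x y t) (b j x y t) (dX3 (b j) x y t)
              (dX3 (dX3 (b j)) x y t) (dX3 (dX3 (dX3 (b j))) x y t) (P j x y t)
              (dX3 (P j) x y t)
            = c j • WXmat3 lam k1 k2 (m x y t) (dX3 m x y t) (b j x y t) (dX3 (b j) x y t)
                (dX3 (dX3 (b j)) x y t) (dX3 (dX3 (dX3 (b j))) x y t) (P j x y t)
                (m x y t * dX3 (b j) x y t) := by
        intro j hj
        rw [Finset.mem_Icc] at hj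
        rw [hPx j hj.1 hj.2 x y t]
      rw [Finset.sum_congr rfl hWXsum]
      -- expand the commutator over the sum
      have hcomm : ∀ (A B : Matrix (Fin 2) (Fin 2) ℝ),
          A * (A + B) - (A + B) * A = A * B - B * A := fun A B => by noncomm_ring
      have hsum2 : U * (∑ j ∈ Finset.Icc 1 n, c j • W j) - (∑ j ∈ Finset.Icc 1 n, c j • W j) * U
          = ∑ j ∈ Finset.Icc 1 n, c j • (U * W j - W j * U) := by
        rw [Finset.mul_sum, Finset.sum_mul, ← Finset.sum_sub_distrib]
        exact Finset.sum_congr rfl fun j hj => by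
          rw [Matrix.mul_smul, Matrix.smul_mul, ← smul_sub]
      -- per-level identity
      have hkey : ∀ j ∈ Finset.Icc 1 n,
          c j • (U * W j - W j * U)
            = (c j * v j) • Kmat3 lam k1
              + c j • WXmat3 lam k1 k2 (m x y t) (dX3 m x y t) (b j x y t) (dX3 (b j) x y t)
                  (dX3 (dX3 (b j)) x y t) (dX3 (dX3 (dX3 (b j))) x y t) (P j x y t)
                  (m x y t * dX3 (b j) x y t) := by
        intro j hj
        have hk := key_level lam k1 k2 (m x y t) (dX3 m x y t) (b j x y t) (dX3 (b j) x y t)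
          (dX3 (dX3 (b j)) x y t) (dX3 (dX3 (dX3 (b j))) x y t) (P j x y t) hlam
        have hk' := sub_eq_iff_eq_add.mp hk
        rw [hk', smul_add, Dmat3, smul_smul]
      calc Dmat3 lam k1 (dT3 m x y t)
          - (Dmat3 lam k1 (dX3 m x y t)
              + ∑ j ∈ Finset.Icc 1 n,
                  c j • WXmat3 lam k1 k2 (m x y t) (dX3 m x y t) (b j x y t) (dX3 (b j) x y t)
                    (dX3 (dX3 (b j)) x y t) (dX3 (dX3 (dX3 (b j))) x y t) (P j x y t)
                    (m x y t * dX3 (b j) x y t))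
          + U * (U + ∑ j ∈ Finset.Icc 1 n, c j • W j)
          - (U + ∑ j ∈ Finset.Icc 1 n, c j • W j) * U
          = Dmat3 lam k1 (dT3 m x y t) - Dmat3 lam k1 (dX3 m x y t)
            + (∑ j ∈ Finset.Icc 1 n, c j • (U * W j - W j * U)
              - ∑ j ∈ Finset.Icc 1 n,
                  c j • WXmat3 lam k1 k2 (m x y t) (dX3 m x y t) (b j x y t) (dX3 (b j) x y t)
                    (dX3 (dX3 (b j)) x y t) (dX3 (dX3 (dX3 (b j))) x y t) (P j x y t)
                    (m x y t * dX3 (b j) x y t)) := by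
            rw [← hsum2]
            noncomm_ring
        _ = Dmat3 lam k1 (dT3 m x y t) - Dmat3 lam k1 (dX3 m x y t)
            + (∑ j ∈ Finset.Icc 1 n, (c j * v j)) • Kmat3 lam k1 := by
            rw [Finset.sum_congr rfl hkey, Finset.sum_add_distrib, Finset.sum_smul]
            abel
        _ = 0 := by
            show (dT3 m x y t) • Kmat3 lam k1 - (dX3 m x y t) • Kmat3 lam k1
              + (∑ j ∈ Finset.Icc 1 n, (c j * v j)) • Kmat3 lam k1 = 0
            rw [← sub_smul, ← add_smul]
            have hz : dT3 m x y t - dX3 m x y t + ∑ j ∈ Finset.Icc 1 n, c j * v j = 0 := by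
              rw [ht x y t, dX3_mul hm (hP n (by omega) le_rfl) x y t,
                hPx n (by omega) le_rfl x y t]
              have hRr : ∀ j, 2 ≤ j → j ≤ n → R j = Sv (j - 1) := by
                intro j hj2 hjn
                show dX3 (b j) x y t - dX3 (dX3 (dX3 (b j))) x y t
                  = k1 * (dX3 m x y t * P (j-1) x y t
                      + m x y t * (m x y t * dX3 (b (j-1)) x y t))
                    + (1/2) * k2 * (2 * m x y t * dX3 (b (j-1)) x y t
                      + dX3 m x y t * b (j-1) x y t)
                rw [hrec j hj2 hjn x y t,
                  dX3_mul hm (hP (j-1) (by omega) (by omega)) x y t,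
                  hPx (j-1) (by omega) (by omega) x y t]
              exact scalar_id lam hlam n (by omega) (dX3 m x y t) Sv R (h1 x y t) hRr
            rw [hz, zero_smul]
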